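/- Let Z ~ HRPar_{1_d}(Q,l) with exponent α > 0. Then R = ‖Z‖_∞ and Θ = Z/‖Z‖_∞ are independent, and R is Pareto(α)-distributed: P(R > r) = r^{-α} for r ≥ 1. -/

import Mathlib

open MeasureTheory Matrix

/-- Unnormalized Hüsler-Reiss Pareto density on `{z > 0 : z ≰ a}`. -/
noncomputable def hrDens {d : ℕ} (Q : Matrix (Fin d) (Fin d) ℝ) (l a : Fin d → ℝ)
    (z : Fin d → ℝ) : ℝ :=
  if (∀ i, 0 < z i) ∧ ¬ ∀ i, z i ≤ a i then
    Real.exp (-(1 / 2) *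
        ((fun i => Real.log (z i)) ⬝ᵥ Q.mulVec fun i => Real.log (z i)) +
        l ⬝ᵥ fun i => Real.log (z i)) * ∏ i, (z i)⁻¹
  else 0

/-- Hüsler-Reiss Pareto normalizing constant `C_a(Q,l)`. -/
noncomputable def hrC {d : ℕ} (Q : Matrix (Fin d) (Fin d) ℝ) (l a : Fin d → ℝ) : ℝ :=
  ∫ z, hrDens Q l a z

/-!
In logarithmic coordinates `x = log z` the Hüsler-Reiss exponent is a quadratic form in `x` plus
a linear term. Since `Q` is symmetric with `Q 1 = 0`, the quadratic form is invariant under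
`x ↦ x + (log r) 1`, i.e. under `z ↦ r z`, while the linear term picks up `(log r) ∑ lᵢ`.
Hence on `{‖z‖ > 1}`, where the law is carried, the density is homogeneous of degree `∑ lᵢ - d`,
and the change of variables `z ↦ r z` (Jacobian `r^d`) gives
`P(‖Z‖ > r, Θ ∈ T) = r^(∑ lᵢ) P(‖Z‖ > 1, Θ ∈ T) = r^(∑ lᵢ) P(Θ ∈ T)` for `r ≥ 1`.
This factorization on the π-system of events `{‖Z‖ > a} ∩ {Θ ∈ T}` yields independence.
-/

open scoped ENNReal Pointwise

lemma Matrix.dotProduct_mulVec_smul_add_of_mulVec_eq_zero {n R : Type*} [Fintype n] [CommRing R]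
    {Q : Matrix n n R} (hsym : Qᵀ = Q) {v : n → R} (hv : Q *ᵥ v = 0) (c : R) (x : n → R) :
    (c • v + x) ⬝ᵥ Q *ᵥ (c • v + x) = x ⬝ᵥ Q *ᵥ x := by
  have hvQ : v ⬝ᵥ Q *ᵥ x = 0 := by
    rw [dotProduct_mulVec, ← hsym, vecMul_transpose, hv, zero_dotProduct]
  rw [mulVec_add, mulVec_smul, hv, smul_zero, zero_add, add_dotProduct, smul_dotProduct, hvQ,
    smul_zero, zero_add]

lemma hrDens_one_of_one_lt_norm {d : ℕ} (Q : Matrix (Fin d) (Fin d) ℝ) (l : Fin d → ℝ)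
    {z : Fin d → ℝ} (hz : 1 < ‖z‖) :
    hrDens Q l (fun _ => 1) z = if ∀ i, 0 < z i then
      Real.exp (-(1 / 2) *
        ((fun i => Real.log (z i)) ⬝ᵥ Q.mulVec fun i => Real.log (z i)) +
        l ⬝ᵥ fun i => Real.log (z i)) * ∏ i, (z i)⁻¹
    else 0 := by
  refine if_congr ⟨And.left, fun hpos => ⟨hpos, fun hle => hz.not_ge ?_⟩⟩ rfl rfl
  exact (pi_norm_le_iff_of_nonneg zero_le_one).2 fun i => by
    rw [Real.norm_of_nonneg (hpos i).le]; exact hle i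

lemma hrDens_one_smul {d : ℕ} {Q : Matrix (Fin d) (Fin d) ℝ} (l : Fin d → ℝ)
    (hsym : Qᵀ = Q) (hQ1 : Q *ᵥ 1 = 0) {r : ℝ} (hr : 1 ≤ r) {z : Fin d → ℝ} (hz : 1 < ‖z‖) :
    hrDens Q l (fun _ => 1) (r • z) = r ^ (∑ i, l i) * (r ^ d)⁻¹ * hrDens Q l (fun _ => 1) z := by
  have hr0 : 0 < r := by linarith
  have hrz : 1 < ‖r • z‖ := by
    rw [norm_smul, Real.norm_of_nonneg hr0.le]
    exact one_lt_mul_of_le_of_lt hr hz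
  rw [hrDens_one_of_one_lt_norm Q l hrz, hrDens_one_of_one_lt_norm Q l hz]
  by_cases hpos : ∀ i, 0 < z i
  · have hlog : (fun i => Real.log ((r • z) i)) = Real.log r • 1 + fun i => Real.log (z i) := by
      funext i
      simp [Real.log_mul hr0.ne' (hpos i).ne']
    have hprod : ∏ i, ((r • z) i)⁻¹ = (r ^ d)⁻¹ * ∏ i, (z i)⁻¹ := by
      simp only [Pi.smul_apply, smul_eq_mul, mul_inv, Finset.prod_mul_distrib, Finset.prod_const,
        Finset.card_univ, Fintype.card_fin, inv_pow]
    have hrpos : ∀ i, 0 < (r • z) i := fun i => mul_pos hr0 (hpos i)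
    rw [if_pos hpos, if_pos hrpos, hlog, hprod,
      dotProduct_mulVec_smul_add_of_mulVec_eq_zero hsym hQ1, dotProduct_add, dotProduct_smul,
      dotProduct_one, smul_eq_mul, Real.rpow_def_of_pos hr0, add_left_comm, Real.exp_add]
    ring
  · have hrpos : ¬ ∀ i, 0 < (r • z) i := fun h => hpos fun i => pos_of_mul_pos_right (h i) hr0.le
    rw [if_neg hpos, if_neg hrpos, mul_zero]

lemma one_lt_norm_of_hrDens_ne_zero {d : ℕ} {Q : Matrix (Fin d) (Fin d) ℝ} {l : Fin d → ℝ}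
    {z : Fin d → ℝ} (hz : hrDens Q l (fun _ => 1) z ≠ 0) : 1 < ‖z‖ := by
  unfold hrDens at hz
  split_ifs at hz with h
  · obtain ⟨i, hi⟩ := not_forall.1 h.2
    exact (not_le.1 hi).trans_le ((le_abs_self _).trans (norm_le_pi_norm z i))
  · exact absurd rfl hz

@[fun_prop]
lemma measurable_hrDens {d : ℕ} (Q : Matrix (Fin d) (Fin d) ℝ) (l a : Fin d → ℝ) :
    Measurable (hrDens Q l a) := by
  refine Measurable.ite ?_ (by fun_prop) measurable_const
  measurability

section Polar

variable {E : Type*} [NormedAddCommGroup E] [NormedSpace ℝ E]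

def polarSet (r : ℝ) (T : Set E) : Set E := {z | r < ‖z‖ ∧ ‖z‖⁻¹ • z ∈ T}

lemma smul_polarSet {r : ℝ} (hr : 0 < r) (s : ℝ) (T : Set E) :
    r • polarSet s T = polarSet (r * s) T := by
  ext z
  have hnorm : ‖r⁻¹ • z‖ = r⁻¹ * ‖z‖ := by
    rw [norm_smul, Real.norm_of_nonneg (inv_nonneg.2 hr.le)]
  have hdir : ‖r⁻¹ • z‖⁻¹ • r⁻¹ • z = ‖z‖⁻¹ • z := by
    rw [hnorm, smul_smul, mul_inv, inv_inv, mul_right_comm, mul_inv_cancel₀ hr.ne', one_mul]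
  simp only [Set.mem_smul_set_iff_inv_smul_mem₀ hr.ne', polarSet, Set.mem_ofPred_eq]
  rw [hdir, hnorm, lt_inv_mul_iff₀ hr]

variable [MeasurableSpace E] [BorelSpace E]

lemma measurableSet_polarSet [SecondCountableTopology E] (r : ℝ) {T : Set E}
    (hT : MeasurableSet T) : MeasurableSet (polarSet r T) :=
  (measurableSet_lt measurable_const measurable_norm).inter
    ((measurable_norm.inv.smul measurable_id) hT)

end Polar

section Haar

variable {E : Type*} [NormedAddCommGroup E] [NormedSpace ℝ E] [MeasurableSpace E] [BorelSpace E]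
  [FiniteDimensional ℝ E] (μ : Measure E) [μ.IsAddHaarMeasure]

lemma withDensity_apply_smul_set {f : E → ℝ≥0∞} (hf : Measurable f) {r : ℝ} (hr : r ≠ 0)
    {s : Set E} (hs : MeasurableSet s) {c : ℝ≥0∞} (hfs : ∀ x ∈ s, f (r • x) = c * f x) :
    μ.withDensity f (r • s) = ENNReal.ofReal |r ^ Module.finrank ℝ E| * c * μ.withDensity f s := by
  have hcov : ∫⁻ x in s, f (r • x) ∂μ
      = ENNReal.ofReal |(r ^ Module.finrank ℝ E)⁻¹| * ∫⁻ y in r • s, f y ∂μ := by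
    rw [← smul_eq_mul, ← lintegral_smul_measure, ← Measure.restrict_smul,
      ← Measure.map_addHaar_smul μ hr,
      setLIntegral_map (hs.const_smul₀ r) hf (measurable_const_smul r), Set.preimage_smul₀ hr,
      inv_smul_smul₀ hr]
  have hscale : ∫⁻ x in s, f (r • x) ∂μ = c * ∫⁻ x in s, f x ∂μ := by
    rw [setLIntegral_congr_fun hs hfs, lintegral_const_mul c hf]
  have hcancel : ENNReal.ofReal |r ^ Module.finrank ℝ E|
      * ENNReal.ofReal |(r ^ Module.finrank ℝ E)⁻¹| = 1 := by
    rw [← ENNReal.ofReal_mul (abs_nonneg _), ← abs_mul, mul_inv_cancel₀ (pow_ne_zero _ hr),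
      abs_one, ENNReal.ofReal_one]
  rw [withDensity_apply _ (hs.const_smul₀ r), withDensity_apply _ hs, mul_assoc, ← hscale, hcov,
    ← mul_assoc, hcancel, one_mul]

end Haar

section ParetoPolar

open ProbabilityTheory

variable {E : Type*} [NormedAddCommGroup E] [NormedSpace ℝ E] [MeasurableSpace E]

def IsParetoScaling (ν : Measure E) (β : ℝ) : Prop :=
  ∀ r, 1 ≤ r → ∀ T, MeasurableSet T → ν (polarSet r T) = ENNReal.ofReal (r ^ β) * ν (polarSet 1 T)

variable {ν : Measure E} {β : ℝ}

lemma polarSet_ae_eq_of_le_one (hsupp : ∀ᵐ z ∂ν, 1 < ‖z‖) {a : ℝ} (ha : a ≤ 1) (T : Set E) :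
    polarSet a T =ᵐ[ν] (fun z => ‖z‖⁻¹ • z) ⁻¹' T :=
  hsupp.mono fun _ hz => propext ⟨And.right, fun h => ⟨ha.trans_lt hz, h⟩⟩

lemma measure_polarSet_of_scaling (hsupp : ∀ᵐ z ∂ν, 1 < ‖z‖) (hscale : IsParetoScaling ν β)
    (a : ℝ) {T : Set E} (hT : MeasurableSet T) :
    ν (polarSet a T) = ENNReal.ofReal (max a 1 ^ β) * ν ((fun z => ‖z‖⁻¹ • z) ⁻¹' T) := by
  rcases le_total a 1 with ha | ha
  · rw [max_eq_right ha, Real.one_rpow, ENNReal.ofReal_one, one_mul,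
      measure_congr (polarSet_ae_eq_of_le_one hsupp ha T)]
  · rw [max_eq_left ha, hscale a ha T hT, measure_congr (polarSet_ae_eq_of_le_one hsupp le_rfl T)]

variable [IsProbabilityMeasure ν]

lemma measure_lt_norm_of_scaling (hsupp : ∀ᵐ z ∂ν, 1 < ‖z‖) (hscale : IsParetoScaling ν β)
    {r : ℝ} (hr : 1 ≤ r) : ν {z | r < ‖z‖} = ENNReal.ofReal (r ^ β) := by
  simpa only [max_eq_left hr, Set.preimage_univ, measure_univ, mul_one, polarSet, Set.mem_univ,
    and_true] using measure_polarSet_of_scaling hsupp hscale r MeasurableSet.univ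

variable [BorelSpace E] [SecondCountableTopology E]

lemma indepFun_norm_direction_of_scaling (hsupp : ∀ᵐ z ∂ν, 1 < ‖z‖)
    (hscale : IsParetoScaling ν β) :
    IndepFun (fun z : E => ‖z‖) (fun z => ‖z‖⁻¹ • z) ν := by
  have hdir : Measurable fun z : E => ‖z‖⁻¹ • z := measurable_norm.inv.smul measurable_id
  rw [IndepFun_iff_Indep]
  refine IndepSets.indep measurable_norm.comap_le hdir.comap_le
    (isPiSystem_Ioi.comap fun z : E => ‖z‖)
    (MeasurableSpace.isPiSystem_measurableSet.comap fun z : E => ‖z‖⁻¹ • z) ?_ ?_ ?_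
  · rw [BorelSpace.measurable_eq (α := ℝ), borel_eq_generateFrom_Ioi,
      MeasurableSpace.comap_generateFrom]
    rfl
  · conv_lhs => rw [← MeasurableSpace.generateFrom_measurableSet (α := E)]
    rw [MeasurableSpace.comap_generateFrom]
    rfl
  · rw [IndepSets_iff]
    rintro _ _ ⟨_, ⟨a, rfl⟩, rfl⟩ ⟨T, hT, rfl⟩
    have hnorm : (fun z : E => ‖z‖) ⁻¹' Set.Ioi a = polarSet a Set.univ := by
      ext; simp [polarSet]
    have hinter : (fun z : E => ‖z‖) ⁻¹' Set.Ioi a ∩ (fun z => ‖z‖⁻¹ • z) ⁻¹' T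
        = polarSet a T := rfl
    rw [hinter, hnorm, measure_polarSet_of_scaling hsupp hscale a hT,
      measure_polarSet_of_scaling hsupp hscale a MeasurableSet.univ, Set.preimage_univ,
      measure_univ, mul_one]

end ParetoPolar

lemma ProbabilityTheory.IndepFun.comp_of_map {Ω E β γ : Type*} [MeasurableSpace Ω]
    [MeasurableSpace E] [MeasurableSpace β] [MeasurableSpace γ] {μ : Measure Ω} {X : Ω → E}
    (hX : Measurable X) {f : E → β} {g : E → γ} (hf : Measurable f) (hg : Measurable g)
    (h : IndepFun f g (μ.map X)) : IndepFun (f ∘ X) (g ∘ X) μ := by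
  rw [indepFun_iff_measure_inter_preimage_eq_mul] at h ⊢
  intro s t hs ht
  have hst := h s t hs ht
  rwa [Measure.map_apply hX ((hf hs).inter (hg ht)), Measure.map_apply hX (hf hs),
    Measure.map_apply hX (hg ht)] at hst

noncomputable def hrParetoMeasure {d : ℕ} (Q : Matrix (Fin d) (Fin d) ℝ) (l : Fin d → ℝ) :
    Measure (Fin d → ℝ) :=
  volume.withDensity fun z => ENNReal.ofReal ((hrC Q l fun _ => 1)⁻¹ * hrDens Q l (fun _ => 1) z)

section HRPareto

variable {d : ℕ} (Q : Matrix (Fin d) (Fin d) ℝ) (l : Fin d → ℝ)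

lemma hrParetoMeasure_ae_one_lt_norm : ∀ᵐ z ∂hrParetoMeasure Q l, 1 < ‖z‖ := by
  rw [hrParetoMeasure, ae_withDensity_iff (by fun_prop)]
  refine Filter.Eventually.of_forall fun z hz =>
    one_lt_norm_of_hrDens_ne_zero (Q := Q) (l := l) fun h0 => hz ?_
  rw [h0, mul_zero, ENNReal.ofReal_zero]

variable {Q}

lemma isParetoScaling_hrParetoMeasure (hsym : Qᵀ = Q) (hQ1 : Q *ᵥ 1 = 0) :
    IsParetoScaling (hrParetoMeasure Q l) (∑ i, l i) := by
  intro r hr T hT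
  have hr0 : 0 < r := by linarith
  have hdens : ∀ z ∈ polarSet 1 T,
      ENNReal.ofReal ((hrC Q l fun _ => 1)⁻¹ * hrDens Q l (fun _ => 1) (r • z))
        = ENNReal.ofReal (r ^ (∑ i, l i) * (r ^ d)⁻¹)
          * ENNReal.ofReal ((hrC Q l fun _ => 1)⁻¹ * hrDens Q l (fun _ => 1) z) := fun z hz => by
    rw [hrDens_one_smul l hsym hQ1 hr hz.1, ← ENNReal.ofReal_mul (by positivity)]
    congr 1
    ring
  rw [show polarSet r T = r • polarSet 1 T by rw [smul_polarSet hr0, mul_one], hrParetoMeasure,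
    withDensity_apply_smul_set volume (by fun_prop) hr0.ne' (measurableSet_polarSet 1 hT) hdens,
    Module.finrank_fin_fun, ← ENNReal.ofReal_mul (abs_nonneg _), abs_of_pos (by positivity),
    mul_left_comm, mul_inv_cancel₀ (by positivity), mul_one]

end HRPareto

theorem hr_pareto_polar_decomposition_general
    {Ω : Type*} [MeasurableSpace Ω] (μ : Measure Ω) [IsProbabilityMeasure μ]
    {d : ℕ}
    (Q : Matrix (Fin d) (Fin d) ℝ) (l : Fin d → ℝ)
    (hQ : Q.PosSemidef)
    (hker : ∀ v : Fin d → ℝ, Q.mulVec v = 0 ↔ ∃ c : ℝ, v = fun _ => c)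
    (Z : Ω → Fin d → ℝ) (hZ : Measurable Z)
    (hdist : Measure.map Z μ = volume.withDensity fun z =>
      ENNReal.ofReal ((hrC Q l fun _ => 1)⁻¹ * hrDens Q l (fun _ => 1) z)) :
    ProbabilityTheory.IndepFun (fun ω => ‖Z ω‖) (fun ω => ‖Z ω‖⁻¹ • Z ω) μ ∧
      ∀ r : ℝ, 1 ≤ r → μ {ω | r < ‖Z ω‖} = ENNReal.ofReal (r ^ (∑ i, l i)) := by
  have hlaw : μ.map Z = hrParetoMeasure Q l := hdist
  have : IsProbabilityMeasure (hrParetoMeasure Q l) :=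
    hlaw ▸ Measure.isProbabilityMeasure_map hZ.aemeasurable
  have hsym : Qᵀ = Q := hQ.1
  have hscale := isParetoScaling_hrParetoMeasure l hsym ((hker 1).2 ⟨1, rfl⟩)
  have hsupp := hrParetoMeasure_ae_one_lt_norm Q l
  refine ⟨?_, fun r hr => ?_⟩
  · refine ProbabilityTheory.IndepFun.comp_of_map hZ measurable_norm
      (measurable_norm.inv.smul measurable_id) ?_
    rw [hlaw]
    exact indepFun_norm_direction_of_scaling hsupp hscale
  · rw [← measure_lt_norm_of_scaling hsupp hscale hr, ← hlaw,
      Measure.map_apply hZ (measurableSet_lt measurable_const measurable_norm)]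
    rfl

/-- Polar decomposition of a Hüsler-Reiss Pareto vector with threshold `1_d`:
`R = ‖Z‖_∞` and `Θ = Z/‖Z‖_∞` are independent, and `R` is Pareto(α):
`P(R > r) = r^{-α}` for `r ≥ 1`, where `α = -lᵀ1_d`. (On `Fin d → ℝ` the norm
`‖·‖` is the max-norm.) -/
theorem hr_pareto_polar_decomposition
    {Ω : Type*} [MeasurableSpace Ω] (μ : Measure Ω) [IsProbabilityMeasure μ]
    {d : ℕ} (hd : 2 ≤ d)
    (Q : Matrix (Fin d) (Fin d) ℝ) (l : Fin d → ℝ)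
    (hQ : Q.PosSemidef)
    (hker : ∀ v : Fin d → ℝ, Q.mulVec v = 0 ↔ ∃ c : ℝ, v = fun _ => c)
    (hl : ∑ i, l i < 0)
    (Z : Ω → Fin d → ℝ) (hZ : Measurable Z)
    (hdist : Measure.map Z μ = volume.withDensity fun z =>
      ENNReal.ofReal ((hrC Q l fun _ => 1)⁻¹ * hrDens Q l (fun _ => 1) z)) :
    ProbabilityTheory.IndepFun (fun ω => ‖Z ω‖) (fun ω => ‖Z ω‖⁻¹ • Z ω) μ ∧
      ∀ r : ℝ, 1 ≤ r → μ {ω | r < ‖Z ω‖} = ENNReal.ofReal (r ^ (∑ i, l i)) :=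
  hr_pareto_polar_decomposition_general μ Q l hQ hker Z hZ hdist
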